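/- Let G=(V,E) be a connected graph with at least two vertices. For any x, y ∈ V and any integer t ≥ 1, the distance in the generalized Sierpiński graph S(G,t) between the extreme vertices x^t and y^t satisfies d_{S(G,t)}(x^t, y^t) = (2^t − 1)·d_G(x,y). -/

import Mathlib

/-- The generalized Sierpiński graph `S(G,t)` of a base graph `G`: vertices are words of
length `t` over the vertex set (encoded as `Fin t → V`); two words are adjacent iff they are
of the form `w x y^{d-1}` and `w y x^{d-1}` for some edge `{x,y}` of `G`. -/
def SierpinskiGraph {V : Type*} (G : SimpleGraph V) (t : ℕ) : SimpleGraph (Fin t → V) where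
  Adj u v := ∃ i : Fin t, G.Adj (u i) (v i) ∧
      (∀ j : Fin t, j < i → u j = v j) ∧
      (∀ j : Fin t, i < j → u j = v i ∧ v j = u i)
  symm := by
    constructor
    rintro u v ⟨i, h1, h2, h3⟩
    exact ⟨i, h1.symm, fun j hj => (h2 j hj).symm, fun j hj => ⟨(h3 j hj).2, (h3 j hj).1⟩⟩
  loopless := by
    constructor
    rintro u ⟨i, h1, -, -⟩
    exact G.loopless.irrefl _ h1

/-!
An edge `ab` of `G` yields a walk of length `2^t - 1` from `a^t` to `b^t` in `S(G,t)`, so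
following a geodesic of `G` gives the upper bound. For the lower bound, the weighted distance
`φ(u) = ∑ⱼ 2^(t-1-j) d_G(u_j, y)` changes by at most `1` along every edge of `S(G,t)`, while
`φ(x^t) - φ(y^t) = (2^t - 1) d_G(x, y)`.
-/

open SimpleGraph

theorem Fin.cons_self_const {α : Type*} {n : ℕ} (a : α) :
    (Fin.cons a (fun _ : Fin n => a) : Fin (n + 1) → α) = fun _ => a :=
  funext fun j => Fin.cases rfl (fun _ => rfl) j

theorem SimpleGraph.Walk.le_add_length {W : Type*} {H : SimpleGraph W} (f : W → ℤ)
    (hf : ∀ u v, H.Adj u v → f u ≤ f v + 1) {u v : W} (p : H.Walk u v) :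
    f u ≤ f v + p.length := by
  induction p with
  | nil => simp
  | cons h _ ih =>
    rw [Walk.length_cons]
    have := hf _ _ h
    push_cast
    linarith

theorem SimpleGraph.Reachable.le_add_dist {W : Type*} {H : SimpleGraph W} (f : W → ℤ)
    (hf : ∀ u v, H.Adj u v → f u ≤ f v + 1) {u v : W} (huv : H.Reachable u v) :
    f u ≤ f v + H.dist u v := by
  obtain ⟨p, hp⟩ := huv.exists_walk_length_eq_dist
  exact hp ▸ p.le_add_length f hf

namespace SierpinskiGraph

variable {V : Type*} (G : SimpleGraph V)

theorem adj_cons_cons_iff {t : ℕ} {a b : V} {u v : Fin t → V} :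
    (SierpinskiGraph G (t + 1)).Adj (Fin.cons a u) (Fin.cons b v) ↔
      (a = b ∧ (SierpinskiGraph G t).Adj u v) ∨
      (G.Adj a b ∧ u = (fun _ => b) ∧ v = (fun _ => a)) := by
  constructor
  · rintro ⟨i, hadj, hbefore, hafter⟩
    induction i using Fin.cases with
    | zero =>
      refine Or.inr ⟨by simpa using hadj, funext fun j => ?_, funext fun j => ?_⟩
      · simpa using (hafter j.succ (Fin.succ_pos j)).1
      · simpa using (hafter j.succ (Fin.succ_pos j)).2
    | succ i =>
      refine Or.inl ⟨by simpa using hbefore 0 (Fin.succ_pos i), i, by simpa using hadj,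
        fun j hj => ?_, fun j hj => ?_⟩
      · simpa using hbefore j.succ (Fin.succ_lt_succ_iff.mpr hj)
      · simpa using hafter j.succ (Fin.succ_lt_succ_iff.mpr hj)
  · rintro (⟨rfl, i, hadj, hbefore, hafter⟩ | ⟨hab, rfl, rfl⟩)
    · refine ⟨i.succ, by simpa using hadj, fun j hj => ?_, fun j hj => ?_⟩
      · induction j using Fin.cases with
        | zero => rfl
        | succ j => simpa using hbefore j (Fin.succ_lt_succ_iff.mp hj)
      · induction j using Fin.cases with
        | zero => exact absurd hj (Fin.succ_pos i).not_gt
        | succ j => simpa using hafter j (Fin.succ_lt_succ_iff.mp hj)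
    · refine ⟨0, by simpa using hab, fun j hj => absurd hj (Fin.not_lt_zero j), fun j hj => ?_⟩
      induction j using Fin.cases with
      | zero => exact absurd hj (lt_irrefl 0)
      | succ j => simp

def consHom (t : ℕ) (c : V) : SierpinskiGraph G t →g SierpinskiGraph G (t + 1) where
  toFun u := Fin.cons c u
  map_rel' h := (adj_cons_cons_iff G).mpr (Or.inl ⟨rfl, h⟩)

theorem consHom_const (t : ℕ) (c : V) : consHom G t c (fun _ => c) = fun _ => c :=
  Fin.cons_self_const c

theorem exists_walk_const_of_adj {a b : V} (hab : G.Adj a b) (t : ℕ) :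
    ∃ p : (SierpinskiGraph G t).Walk (fun _ => a) (fun _ => b), p.length = 2 ^ t - 1 := by
  induction t with
  | zero => exact ⟨Walk.nil.copy rfl (Subsingleton.elim _ _), by simp⟩
  | succ t ih =>
    obtain ⟨p, hp⟩ := ih
    -- `a^{t+1} → a b^t → b a^t → b^{t+1}`: two copies of `p` joined by the edge at the first letter
    have hmid : (SierpinskiGraph G (t + 1)).Adj (consHom G t a fun _ => b)
        (consHom G t b fun _ => a) :=
      (adj_cons_cons_iff G).mpr (Or.inr ⟨hab, rfl, rfl⟩)
    refine ⟨((p.map (consHom G t a)).copy (consHom_const G t a) rfl).append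
      (.cons hmid ((p.map (consHom G t b)).copy rfl (consHom_const G t b))), ?_⟩
    have : 1 ≤ 2 ^ t := Nat.one_le_two_pow
    simp only [Walk.length_append, Walk.length_cons, Walk.length_copy, Walk.length_map, hp,
      pow_succ]
    omega

theorem exists_walk_const (t : ℕ) {x y : V} (p : G.Walk x y) :
    ∃ q : (SierpinskiGraph G t).Walk (fun _ => x) (fun _ => y),
      q.length = (2 ^ t - 1) * p.length := by
  induction p with
  | nil => exact ⟨Walk.nil, rfl⟩
  | cons hadj _ ih =>
    obtain ⟨q, hq⟩ := ih
    obtain ⟨r, hr⟩ := exists_walk_const_of_adj G hadj t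
    exact ⟨r.append q, by rw [Walk.length_append, Walk.length_cons, hr, hq, Nat.mul_succ,
      Nat.add_comm]⟩

noncomputable def weightedDist (y : V) : (t : ℕ) → (Fin t → V) → ℤ
  | 0, _ => 0
  | t + 1, u => 2 ^ t * G.dist (u 0) y + weightedDist y t (Fin.tail u)

@[simp]
theorem weightedDist_cons (y a : V) (t : ℕ) (u : Fin t → V) :
    weightedDist G y (t + 1) (Fin.cons a u) = 2 ^ t * G.dist a y + weightedDist G y t u := by
  simp [weightedDist]

theorem weightedDist_const (y c : V) (t : ℕ) :
    weightedDist G y t (fun _ => c) = (2 ^ t - 1) * G.dist c y := by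
  induction t with
  | zero => simp [weightedDist]
  | succ t ih =>
    rw [← Fin.cons_self_const c, weightedDist_cons, ih, pow_succ]
    ring

theorem weightedDist_le_add_one_of_adj (hconn : G.Connected) (y : V) {t : ℕ}
    {u v : Fin t → V} (huv : (SierpinskiGraph G t).Adj u v) :
    weightedDist G y t u ≤ weightedDist G y t v + 1 := by
  induction t with
  | zero => exact absurd (Subsingleton.elim u v) huv.ne
  | succ t ih =>
    rw [← Fin.cons_self_tail u, ← Fin.cons_self_tail v, adj_cons_cons_iff] at huv
    rw [← Fin.cons_self_tail u, ← Fin.cons_self_tail v, weightedDist_cons, weightedDist_cons]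
    rcases huv with ⟨hhead, htail⟩ | ⟨hadj, hu, hv⟩
    · rw [hhead]
      linarith [ih htail]
    · -- the weights `2^t` of the first letter and `2^t - 1` of the constant tail cancel
      rw [hu, hv, weightedDist_const, weightedDist_const]
      have := hconn.dist_triangle (u := u 0) (v := v 0) (w := y)
      rw [dist_eq_one_iff_adj.mpr hadj] at this
      linarith

end SierpinskiGraph

open SierpinskiGraph in
theorem stmt_4_general {V : Type*} (G : SimpleGraph V) (hconn : G.Connected)
    (t : ℕ) (x y : V) :
    (SierpinskiGraph G t).dist (fun _ => x) (fun _ => y) = (2 ^ t - 1) * G.dist x y := by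
  obtain ⟨p, hp⟩ := hconn.exists_walk_length_eq_dist x y
  obtain ⟨q, hq⟩ := exists_walk_const G t p
  refine le_antisymm (hp ▸ hq ▸ dist_le q) ?_
  have hlower := Reachable.le_add_dist (weightedDist G y t)
    (fun _ _ => weightedDist_le_add_one_of_adj G hconn y) ⟨q⟩
  rw [weightedDist_const, weightedDist_const, dist_self, Nat.cast_zero, mul_zero, zero_add]
    at hlower
  have : 1 ≤ 2 ^ t := Nat.one_le_two_pow
  zify [this]
  linarith

/-- for a connected graph `G` with at least two vertices, any `x, y ∈ V` and
`t ≥ 1`, the distance in `S(G,t)` between the extreme vertices `x^t` and `y^t` is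
`(2^t − 1)·d_G(x,y)`. -/
theorem stmt_4 {V : Type*} (G : SimpleGraph V) (hconn : G.Connected) (hV : Nontrivial V)
    (t : ℕ) (ht : 1 ≤ t) (x y : V) :
    (SierpinskiGraph G t).dist (fun _ => x) (fun _ => y) = (2 ^ t - 1) * G.dist x y :=
  stmt_4_general G hconn t x y
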